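/- In the coordinated model, all miners have the same individual efficiency (i.e., each gets its fair share of blocks) if and only if they are all equidistant from the coordinator. Precisely: let X_1,…,X_n be independent exponential random variables with rates h_1,…,h_n > 0 and shifts d_1,…,d_n ≥ 0, and let p_i = P( X_i + d_i ≤ X_k + d_k for all k ). Then p_i/h_i = p_j/h_j for all pairs i, j if and only if d_1 = d_2 = ⋯ = d_n. -/

import Mathlib

/-!
Conditioning on the time `x` of miner `i` and using independence, miner `i` wins with
probability `h i * ∫_{d i}^∞ G`, where `G t = ∏ₖ exp (-h k (t - d k)⁺)` is the probability that
no block arrives at the coordinator before time `t`. So `p i / h i = J (d i)` for the single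
function `J a = ∫_a^∞ G`, which is strictly decreasing because `G > 0`; equal efficiencies
therefore force equal delays.
-/

open MeasureTheory ProbabilityTheory Real Set

lemma expMeasure_Ioi {r : ℝ} (hr : 0 < r) (s : ℝ) :
    expMeasure r (Ioi s) = ENNReal.ofReal (exp (-(r * max s 0))) := by
  have := isProbabilityMeasure_expMeasure hr
  rw [← compl_Iic, prob_compl_eq_one_sub measurableSet_Iic, ← ofReal_cdf, ← ENNReal.ofReal_one,
    ← ENNReal.ofReal_sub _ (cdf_nonneg _ _), cdf_expMeasure_eq hr]
  rcases le_or_gt 0 s with hs | hs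
  · simp [hs]
  · simp [hs.not_ge, hs.le]

lemma expMeasure_Ici {r : ℝ} (hr : 0 < r) (s : ℝ) :
    expMeasure r (Ici s) = ENNReal.ofReal (exp (-(r * max s 0))) := by
  have : NullSingletonClass (expMeasure r) :=
    inferInstanceAs (NullSingletonClass (volume.withDensity _))
  rw [← measure_congr Ioi_ae_eq_Ici, expMeasure_Ioi hr]

lemma lintegral_expMeasure (r : ℝ) {g : ℝ → ENNReal} (hg : Measurable g) :
    ∫⁻ x, g x ∂expMeasure r = ∫⁻ x in Ici 0, ENNReal.ofReal (r * exp (-(r * x))) * g x := by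
  rw [expMeasure, gammaMeasure, lintegral_withDensity_eq_lintegral_mul _
    (f := gammaPDF 1 r) (measurable_gammaPDFReal 1 r).ennreal_ofReal hg,
    ← lintegral_indicator measurableSet_Ici]
  congr 1
  ext x
  rcases le_or_gt 0 x with hx | hx
  · simp [hx, gammaPDF, gammaPDFReal]
  · simp [hx.not_ge, gammaPDF, gammaPDFReal]

lemma setLIntegral_Ici_add_right (f : ℝ → ENNReal) (a : ℝ) :
    ∫⁻ x in Ici 0, f (x + a) = ∫⁻ t in Ici a, f t := by
  simpa only [preimage_add_const_Ici, sub_self] using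
    (measurePreserving_add_right volume a).setLIntegral_comp_preimage_emb
      (measurableEmbedding_addRight a) f (Ici a)

lemma ProbabilityTheory.iIndepFun.indepFun_compl_singleton {Ω ι : Type*} [MeasurableSpace Ω]
    {μ : Measure Ω} [Fintype ι] [DecidableEq ι] {X : ι → Ω → ℝ} (hXm : ∀ k, Measurable (X k))
    (hindep : iIndepFun X μ) (i : ι) :
    IndepFun (X i) (fun ω (k : ({i}ᶜ : Finset ι)) => X k ω) μ :=
  (hindep.indepFun_finset {i} {i}ᶜ disjoint_compl_right hXm).comp
    (φ := fun v : ({i} : Finset ι) → ℝ => v ⟨i, Finset.mem_singleton_self i⟩)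
    (measurable_pi_apply _) measurable_id

lemma measure_forall_add_le_add {Ω ι : Type*} [MeasurableSpace Ω] {μ : Measure Ω}
    [IsFiniteMeasure μ] [Fintype ι] [DecidableEq ι] {X : ι → Ω → ℝ}
    (hXm : ∀ k, Measurable (X k)) (hindep : iIndepFun X μ) (c : ι → ℝ) (i : ι) :
    μ {ω | ∀ k, X i ω + c i ≤ X k ω + c k} =
      ∫⁻ x, ∏ k ∈ {i}ᶜ, μ (X k ⁻¹' Ici (x + c i - c k)) ∂μ.map (X i) := by
  set Z : Ω → ({i}ᶜ : Finset ι) → ℝ := fun ω k => X k ω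
  have hZm : Measurable Z := measurable_pi_lambda _ fun k => hXm k
  set S : Set (ℝ × (({i}ᶜ : Finset ι) → ℝ)) := {p | ∀ k, p.1 + c i ≤ p.2 k + c k}
  have hS : MeasurableSet S := by
    simp only [S, ofPred_forall]
    exact MeasurableSet.iInter fun k => measurableSet_le (measurable_fst.add_const _)
      (((measurable_pi_apply k).comp measurable_snd).add_const _)
  have hW : {ω | ∀ k, X i ω + c i ≤ X k ω + c k} = (fun ω => (X i ω, Z ω)) ⁻¹' S := by
    ext ω
    simp only [mem_ofPred_eq, mem_preimage, S, Z, Subtype.forall, Finset.mem_compl,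
      Finset.mem_singleton]
    exact ⟨fun H k _ => H k, fun H k => if hk : k = i then hk ▸ le_rfl else H k hk⟩
  have hslice : ∀ x, Z ⁻¹' (Prod.mk x ⁻¹' S) =
      ⋂ k ∈ ({i}ᶜ : Finset ι), X k ⁻¹' Ici (x + c i - c k) := by
    intro x
    ext ω
    simp [S, Z]
  rw [hW, ← Measure.map_apply ((hXm i).prodMk hZm) hS,
    (indepFun_iff_map_prod_eq_prod_map_map (hXm i).aemeasurable hZm.aemeasurable).mp
      (hindep.indepFun_compl_singleton hXm i), Measure.prod_apply hS]
  refine lintegral_congr fun x => ?_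
  rw [Measure.map_apply hZm (measurable_prodMk_left hS), hslice,
    hindep.meas_biInter fun k _ => ⟨Ici _, measurableSet_Ici, rfl⟩]

section ArrivalTail

variable {ι : Type*} [Fintype ι]

/-- `P(X k + d k > t for all k)` for independent `X k ∼ Exp(h k)`. -/
noncomputable def arrivalTail (h d : ι → ℝ) (t : ℝ) : ℝ := ∏ k, exp (-(h k * max (t - d k) 0))

noncomputable def arrivalTailIntegral (h d : ι → ℝ) (a : ℝ) : ℝ := ∫ t in Ioi a, arrivalTail h d t

lemma arrivalTail_pos (h d : ι → ℝ) (t : ℝ) : 0 < arrivalTail h d t :=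
  Finset.prod_pos fun _ _ => exp_pos _

lemma continuous_arrivalTail (h d : ι → ℝ) : Continuous (arrivalTail h d) := by
  unfold arrivalTail
  fun_prop

lemma arrivalTail_le {h : ι → ℝ} (hh : ∀ k, 0 ≤ h k) (d : ι → ℝ) (k : ι) (t : ℝ) :
    arrivalTail h d t ≤ exp (h k * d k) * exp (-h k * t) := by
  classical
  have hexp_le_one : ∀ j, exp (-(h j * max (t - d j) 0)) ≤ 1 := fun j =>
    exp_le_one_iff.mpr (neg_nonpos.mpr (mul_nonneg (hh j) (le_max_right _ _)))
  calc arrivalTail h d t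
      ≤ exp (-(h k * max (t - d k) 0)) :=
        (Fintype.prod_eq_mul_prod_compl k _).trans_le
          (mul_le_of_le_one_right (exp_pos _).le (Finset.prod_le_one (fun _ _ => (exp_pos _).le)
            fun j _ => hexp_le_one j))
    _ ≤ exp (-(h k * (t - d k))) :=
        exp_le_exp.mpr (neg_le_neg (mul_le_mul_of_nonneg_left (le_max_left _ _) (hh k)))
    _ = exp (h k * d k) * exp (-h k * t) := by rw [← exp_add]; ring_nf

lemma integrableOn_arrivalTail [Nonempty ι] {h : ι → ℝ} (hh : ∀ k, 0 < h k) (d : ι → ℝ)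
    (a : ℝ) : IntegrableOn (arrivalTail h d) (Ioi a) := by
  obtain ⟨k⟩ := ‹Nonempty ι›
  refine ((exp_neg_integrableOn_Ioi a (hh k)).const_mul (exp (h k * d k))).mono'
    (continuous_arrivalTail h d).aestronglyMeasurable (ae_of_all _ fun t => ?_)
  rw [Real.norm_of_nonneg (arrivalTail_pos h d t).le]
  exact arrivalTail_le (fun j => (hh j).le) d k t

lemma arrivalTailIntegral_nonneg (h d : ι → ℝ) (a : ℝ) : 0 ≤ arrivalTailIntegral h d a :=
  setIntegral_nonneg measurableSet_Ioi fun t _ => (arrivalTail_pos h d t).le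

lemma strictAnti_arrivalTailIntegral [Nonempty ι] {h : ι → ℝ} (hh : ∀ k, 0 < h k)
    (d : ι → ℝ) : StrictAnti (arrivalTailIntegral h d) := by
  intro a b hab
  have hsplit : arrivalTailIntegral h d a =
      (∫ t in Ioc a b, arrivalTail h d t) + arrivalTailIntegral h d b := by
    rw [arrivalTailIntegral, ← Ioc_union_Ioi_eq_Ioi hab.le,
      setIntegral_union (Ioc_disjoint_Ioi le_rfl) measurableSet_Ioi
        ((continuous_arrivalTail h d).integrableOn_Ioc) (integrableOn_arrivalTail hh d b)]
    rfl
  have hpos : 0 < ∫ t in Ioc a b, arrivalTail h d t := by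
    rw [← intervalIntegral.integral_of_le hab.le]
    exact intervalIntegral.intervalIntegral_pos_of_pos_on
      ((continuous_arrivalTail h d).intervalIntegrable a b) (fun t _ => arrivalTail_pos h d t) hab
  linarith

end ArrivalTail

section Winning

variable {Ω ι : Type*} [MeasurableSpace Ω] {μ : Measure Ω} [IsFiniteMeasure μ]
  [Fintype ι] [DecidableEq ι] {h d : ι → ℝ} {X : ι → Ω → ℝ}

lemma measure_wins_eq (hh : ∀ k, 0 < h k) (hXm : ∀ k, Measurable (X k))
    (hindep : iIndepFun X μ) (hlaw : ∀ k, μ.map (X k) = expMeasure (h k)) (i : ι) :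
    μ {ω | ∀ k, X i ω + d i ≤ X k ω + d k} =
      ENNReal.ofReal (h i * arrivalTailIntegral h d (d i)) := by
  have : Nonempty ι := ⟨i⟩
  have hfactor : ∀ x ∈ Ici (0 : ℝ), ENNReal.ofReal (h i * exp (-(h i * x))) *
      ∏ k ∈ {i}ᶜ, ENNReal.ofReal (exp (-(h k * max (x + d i - d k) 0))) =
        ENNReal.ofReal (h i * arrivalTail h d (x + d i)) := by
    intro x hx
    rw [← ENNReal.ofReal_prod_of_nonneg fun _ _ => (exp_pos _).le,
      ← ENNReal.ofReal_mul (mul_pos (hh i) (exp_pos _)).le, arrivalTail,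
      Fintype.prod_eq_mul_prod_compl i, add_sub_cancel_right, max_eq_left (mem_Ici.mp hx), mul_assoc]
  calc μ {ω | ∀ k, X i ω + d i ≤ X k ω + d k}
      = ∫⁻ x, ∏ k ∈ {i}ᶜ, μ (X k ⁻¹' Ici (x + d i - d k)) ∂μ.map (X i) :=
        measure_forall_add_le_add hXm hindep d i
    _ = ∫⁻ x, ∏ k ∈ {i}ᶜ, ENNReal.ofReal (exp (-(h k * max (x + d i - d k) 0)))
          ∂expMeasure (h i) := by
        simp only [← Measure.map_apply (hXm _) measurableSet_Ici, hlaw, expMeasure_Ici (hh _)]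
    _ = ∫⁻ x in Ici 0, ENNReal.ofReal (h i * arrivalTail h d (x + d i)) := by
        rw [lintegral_expMeasure _ (Finset.measurable_prod _ fun _ _ => by fun_prop)]
        exact setLIntegral_congr_fun measurableSet_Ici hfactor
    _ = ∫⁻ t in Ioi (d i), ENNReal.ofReal (h i * arrivalTail h d t) := by
        rw [setLIntegral_Ici_add_right (fun t => ENNReal.ofReal (h i * arrivalTail h d t)),
          setLIntegral_congr Ioi_ae_eq_Ici]
    _ = ENNReal.ofReal (h i * arrivalTailIntegral h d (d i)) := by
        rw [← ofReal_integral_eq_lintegral_ofReal ((integrableOn_arrivalTail hh d _).const_mul _)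
          (ae_of_all _ fun t => (mul_pos (hh i) (arrivalTail_pos h d t)).le),
          integral_const_mul, arrivalTailIntegral]

lemma toReal_measure_wins_div (hh : ∀ k, 0 < h k) (hXm : ∀ k, Measurable (X k))
    (hindep : iIndepFun X μ) (hlaw : ∀ k, μ.map (X k) = expMeasure (h k)) (i : ι) :
    (μ {ω | ∀ k, X i ω + d i ≤ X k ω + d k}).toReal / h i = arrivalTailIntegral h d (d i) := by
  rw [measure_wins_eq hh hXm hindep hlaw,
    ENNReal.toReal_ofReal (mul_nonneg (hh i).le (arrivalTailIntegral_nonneg h d _)),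
    mul_div_cancel_left₀ _ (hh i).ne']

end Winning

theorem equal_efficiency_iff_equidistant
    {Ω : Type*} [MeasurableSpace Ω] (μ : Measure Ω) [IsProbabilityMeasure μ]
    (n : ℕ) (h d : Fin n → ℝ)
    (hh : ∀ k, 0 < h k)
    (X : Fin n → Ω → ℝ) (hXm : ∀ k, Measurable (X k))
    (hindep : iIndepFun X μ)
    (hlaw : ∀ k, μ.map (X k) = expMeasure (h k)) :
    (∀ i j : Fin n,
        (μ {ω | ∀ k : Fin n, X i ω + d i ≤ X k ω + d k}).toReal / h i =
          (μ {ω | ∀ k : Fin n, X j ω + d j ≤ X k ω + d k}).toReal / h j) ↔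
      ∀ i j : Fin n, d i = d j := by
  refine forall₂_congr fun i j => ?_
  have : Nonempty (Fin n) := ⟨i⟩
  rw [toReal_measure_wins_div hh hXm hindep hlaw, toReal_measure_wins_div hh hXm hindep hlaw]
  exact (strictAnti_arrivalTailIntegral hh d).injective.eq_iff
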